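/- Let F be a filter on ℕ with F ≤ Filter.cofinite and F.NeBot (representing a nontrivial admissible ideal I on ℕ), let E ⊆ ℝ and f : ℝ → ℝ. If f is I-ward continuous on E and E is compact (IsCompact E), then the image f '' E is compact. -/

import Mathlib

/-!
Given `y n = f (x n)` with `x n ∈ E`, compactness gives a subsequence `x ∘ φ → ξ ∈ E`. The
interleaved sequence `x (φ 0), ξ, x (φ 1), ξ, …` is quasi-Cauchy, so ward continuity makes the
differences of its image, which are `± (f (x (φ k)) - f ξ)`, tend to `0` along `F`. As `F` is a
proper filter finer than the cofinite one, `f ξ` is a cluster point of `y ∘ φ`, and a further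
subsequence of `y` converges to `f ξ ∈ f '' E`.
-/

open Filter Topology

section QuasiCauchy

variable {α β : Type*} [SeminormedAddCommGroup α] [SeminormedAddCommGroup β]

def IsQuasiCauchy (F : Filter ℕ) (x : ℕ → α) : Prop :=
  Tendsto (fun n => x (n + 1) - x n) F (𝓝 0)

def IsWardContinuousOn (F : Filter ℕ) (E : Set α) (f : α → β) : Prop :=
  ∀ x : ℕ → α, (∀ n, x n ∈ E) → IsQuasiCauchy F x → IsQuasiCauchy F (f ∘ x)

end QuasiCauchy

section Interleave

variable {α β : Type*}

def interleave (u : ℕ → α) (a : α) (n : ℕ) : α :=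
  if Even n then u (n / 2) else a

theorem interleave_mem {E : Set α} {u : ℕ → α} {a : α} (hu : ∀ n, u n ∈ E) (ha : a ∈ E)
    (n : ℕ) : interleave u a n ∈ E := by
  unfold interleave
  split_ifs
  exacts [hu _, ha]

theorem comp_interleave (g : α → β) (u : ℕ → α) (a : α) :
    g ∘ interleave u a = interleave (g ∘ u) (g a) := by
  funext n
  simp only [Function.comp_apply, interleave]
  split_ifs <;> rfl

theorem tendsto_succ_div_two_atTop : Tendsto (fun n : ℕ => (n + 1) / 2) atTop atTop :=
  tendsto_atTop_atTop.2 fun b => ⟨2 * b, fun n hn => by omega⟩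

variable [SeminormedAddCommGroup α]

-- Whatever the parity of `n`, the pair `n, n + 1` meets `u` at the index `(n + 1) / 2`.
theorem norm_interleave_succ_sub (u : ℕ → α) (a : α) (n : ℕ) :
    ‖interleave u a (n + 1) - interleave u a n‖ = ‖u ((n + 1) / 2) - a‖ := by
  rcases Nat.even_or_odd n with hn | hn
  · have hdiv : (n + 1) / 2 = n / 2 := by rcases hn with ⟨k, rfl⟩; omega
    simp [interleave, hn, Nat.even_add_one, hdiv, norm_sub_rev]
  · simp [interleave, Nat.not_even_iff_odd.2 hn, hn.add_one]

theorem isQuasiCauchy_interleave_iff {l : Filter ℕ} {u : ℕ → α} {a : α} :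
    IsQuasiCauchy l (interleave u a) ↔ Tendsto (fun n => u ((n + 1) / 2)) l (𝓝 a) := by
  rw [IsQuasiCauchy, tendsto_zero_iff_norm_tendsto_zero,
    tendsto_iff_norm_sub_tendsto_zero (f := fun n => u ((n + 1) / 2))]
  simp only [norm_interleave_succ_sub]

theorem Filter.Tendsto.isQuasiCauchy_interleave {u : ℕ → α} {a : α}
    (hu : Tendsto u atTop (𝓝 a)) : IsQuasiCauchy atTop (interleave u a) :=
  isQuasiCauchy_interleave_iff.2 (hu.comp tendsto_succ_div_two_atTop)

theorem mapClusterPt_of_isQuasiCauchy_interleave {F : Filter ℕ} (hF : F ≤ cofinite) [F.NeBot]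
    {u : ℕ → α} {a : α} (hu : IsQuasiCauchy F (interleave u a)) : MapClusterPt a atTop u := by
  have hFtop : Tendsto (fun n : ℕ => (n + 1) / 2) F atTop :=
    tendsto_succ_div_two_atTop.mono_left (Nat.cofinite_eq_atTop ▸ hF)
  exact (isQuasiCauchy_interleave_iff.1 hu).mapClusterPt.of_comp hFtop

end Interleave

theorem IsWardContinuousOn.mapClusterPt {α β : Type*} [SeminormedAddCommGroup α]
    [SeminormedAddCommGroup β] {F : Filter ℕ} (hF : F ≤ cofinite) [F.NeBot] {E : Set α}
    {f : α → β} (hf : IsWardContinuousOn F E f) {x : ℕ → α} (hxE : ∀ n, x n ∈ E) {a : α}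
    (ha : a ∈ E) (hx : Tendsto x atTop (𝓝 a)) : MapClusterPt (f a) atTop (f ∘ x) := by
  have hqc : IsQuasiCauchy F (interleave x a) :=
    hx.isQuasiCauchy_interleave.mono_left (Nat.cofinite_eq_atTop ▸ hF)
  have himage := hf _ (interleave_mem hxE ha) hqc
  rw [comp_interleave] at himage
  exact mapClusterPt_of_isQuasiCauchy_interleave hF himage

theorem ideal_ward_continuous_image_of_compact (F : Filter ℕ)
    (hF : F ≤ Filter.cofinite) [F.NeBot] (E : Set ℝ) (f : ℝ → ℝ)
    (hf : ∀ x : ℕ → ℝ, (∀ n, x n ∈ E) →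
      Tendsto (fun n => x (n + 1) - x n) F (𝓝 0) →
      Tendsto (fun n => f (x (n + 1)) - f (x n)) F (𝓝 0))
    (hE : IsCompact E) :
    IsCompact (f '' E) := by
  rw [isCompact_iff_isSeqCompact]
  intro y hy
  choose x hxE hxy using hy
  obtain rfl : f ∘ x = y := funext hxy
  obtain ⟨ξ, hξE, φ, hφ, hxφ⟩ := hE.isSeqCompact hxE
  have hclus : MapClusterPt (f ξ) atTop (f ∘ (x ∘ φ)) :=
    IsWardContinuousOn.mapClusterPt hF hf (fun n => hxE (φ n)) hξE hxφ
  obtain ⟨ψ, hψ, hyψ⟩ := hclus.tendsto_subseq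
  exact ⟨f ξ, Set.mem_image_of_mem f hξE, φ ∘ ψ, hφ.comp hψ, hyψ⟩
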